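/- Under the same setup (positive solution (γ₁,γ₂) of the predator-prey ODE, with scale functions βₛ, β₁, β₂, βₘ and elasticity functions s_x, g_x, g_y, m_y as defined), the scale function β₁ = G(γ₁,γ₂)/γ₁ satisfies β₁' = β₁ ( (βₛ − β₁) g_x + (β₂ − βₘ) g_y − (βₛ − β₁) ). -/

import Mathlib

/-! Along the flow, `γ₁'/γ₁ = βₛ − β₁` and `γ₂'/γ₂ = β₂ − βₘ`. Taking logarithmic derivatives,
`β₁'/β₁ = G'/G − γ₁'/γ₁`, and the chain rule gives `G'/G = g_x γ₁'/γ₁ + g_y γ₂'/γ₂`. -/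

theorem HasDerivAt.div_eq_mul_logDeriv {f g : ℝ → ℝ} {f' g' t : ℝ}
    (hf : HasDerivAt f f' t) (hg : HasDerivAt g g' t) (hf0 : f t ≠ 0) (hg0 : g t ≠ 0) :
    HasDerivAt (fun s => f s / g s) (f t / g t * (f' / f t - g' / g t)) t :=
  (hf.div hg hg0).congr_deriv (by field_simp)

theorem DifferentiableAt.hasDerivAt_comp_prodMk {G : ℝ × ℝ → ℝ} {γ₁ γ₂ : ℝ → ℝ} {a b t : ℝ}
    (hG : DifferentiableAt ℝ G (γ₁ t, γ₂ t))
    (h₁ : HasDerivAt γ₁ a t) (h₂ : HasDerivAt γ₂ b t) :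
    HasDerivAt (fun s => G (γ₁ s, γ₂ s))
      (a * fderiv ℝ G (γ₁ t, γ₂ t) (1, 0) + b * fderiv ℝ G (γ₁ t, γ₂ t) (0, 1)) t := by
  have hchain := hG.hasFDerivAt.comp_hasDerivAt t (h₁.prodMk h₂)
  have hsplit : ((a, b) : ℝ × ℝ) = a • ((1 : ℝ), (0 : ℝ)) + b • ((0 : ℝ), (1 : ℝ)) := by simp
  rwa [Function.comp_def, hsplit, map_add, map_smul, map_smul, smul_eq_mul, smul_eq_mul] at hchain

theorem moduli_flow_beta_1_general
    (S M : ℝ → ℝ) (G : ℝ × ℝ → ℝ)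
    (γ₁ γ₂ : ℝ → ℝ) (t : ℝ)
    (hGpos : ∀ p : ℝ × ℝ, 0 < p.1 → 0 < p.2 → 0 < G p)
    (hG : Differentiable ℝ G)
    (hγ₁pos : ∀ s, 0 < γ₁ s) (hγ₂pos : ∀ s, 0 < γ₂ s)
    (hode₁ : ∀ s, HasDerivAt γ₁ (S (γ₁ s) - G (γ₁ s, γ₂ s)) s)
    (hode₂ : ∀ s, HasDerivAt γ₂ (G (γ₁ s, γ₂ s) - M (γ₂ s)) s) :
    HasDerivAt (fun s => G (γ₁ s, γ₂ s) / γ₁ s)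
      ((G (γ₁ t, γ₂ t) / γ₁ t) *
        ((S (γ₁ t) / γ₁ t - G (γ₁ t, γ₂ t) / γ₁ t) *
            (γ₁ t * fderiv ℝ G (γ₁ t, γ₂ t) (1, 0) / G (γ₁ t, γ₂ t)) +
         (G (γ₁ t, γ₂ t) / γ₂ t - M (γ₂ t) / γ₂ t) *
            (γ₂ t * fderiv ℝ G (γ₁ t, γ₂ t) (0, 1) / G (γ₁ t, γ₂ t)) -
         (S (γ₁ t) / γ₁ t - G (γ₁ t, γ₂ t) / γ₁ t))) t := by
  have hγ₁ne := (hγ₁pos t).ne'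
  have hγ₂ne := (hγ₂pos t).ne'
  have hGne := (hGpos (γ₁ t, γ₂ t) (hγ₁pos t) (hγ₂pos t)).ne'
  have hGflow := (hG (γ₁ t, γ₂ t)).hasDerivAt_comp_prodMk (hode₁ t) (hode₂ t)
  convert hGflow.div_eq_mul_logDeriv (hode₁ t) hGne hγ₁ne using 1
  field_simp

/-- Moduli space flow equation for `β₁ = G(γ₁,γ₂)/γ₁`:
`β₁' = β₁((βₛ − β₁) g_x + (β₂ − βₘ) g_y − (βₛ − β₁))`. -/
theorem moduli_flow_beta_1
    (S M : ℝ → ℝ) (G : ℝ × ℝ → ℝ)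
    (γ₁ γ₂ : ℝ → ℝ) (t : ℝ)
    (hSpos : ∀ x, 0 < x → 0 < S x)
    (hGpos : ∀ p : ℝ × ℝ, 0 < p.1 → 0 < p.2 → 0 < G p)
    (hMpos : ∀ y, 0 < y → 0 < M y)
    (hS : Differentiable ℝ S)
    (hM : Differentiable ℝ M)
    (hG : Differentiable ℝ G)
    (hγ₁pos : ∀ s, 0 < γ₁ s) (hγ₂pos : ∀ s, 0 < γ₂ s)
    (hode₁ : ∀ s, HasDerivAt γ₁ (S (γ₁ s) - G (γ₁ s, γ₂ s)) s)
    (hode₂ : ∀ s, HasDerivAt γ₂ (G (γ₁ s, γ₂ s) - M (γ₂ s)) s) :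
    HasDerivAt (fun s => G (γ₁ s, γ₂ s) / γ₁ s)
      ((G (γ₁ t, γ₂ t) / γ₁ t) *
        ((S (γ₁ t) / γ₁ t - G (γ₁ t, γ₂ t) / γ₁ t) *
            (γ₁ t * fderiv ℝ G (γ₁ t, γ₂ t) (1, 0) / G (γ₁ t, γ₂ t)) +
         (G (γ₁ t, γ₂ t) / γ₂ t - M (γ₂ t) / γ₂ t) *
            (γ₂ t * fderiv ℝ G (γ₁ t, γ₂ t) (0, 1) / G (γ₁ t, γ₂ t)) -
         (S (γ₁ t) / γ₁ t - G (γ₁ t, γ₂ t) / γ₁ t))) t :=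
  moduli_flow_beta_1_general S M G γ₁ γ₂ t hGpos hG hγ₁pos hγ₂pos hode₁ hode₂
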